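/- arXiv:2503.23180 — 2 statements merged into one kernel-verified Lean document; each statement's English description precedes it below -/
import Mathlib

section
/- Let 0 < γ < β ≤ 1, θ > 0, A > 0, δ = γ/β, and Φ(t,s) = exp( -θA(1-s)^{γ-β}(B(t,s)^{1-δ}-1)/(1-δ) ) with B(t,s) = 1 + t(1-s)^β/A. With normalization z = z(t) = (A/t)^{1/γ}, for every λ > 0, lim_{t→∞} Φ(t, e^{-λz}) = exp(-θAλ^γ). -/
/-!
Put `u = 1 - e^{-λz}` and `x = t u^β / A`. The exponent of `Φ(t, e^{-λz})` is
`-θ (t u^γ) · ((1 + x)^{1-δ} - 1) / ((1 - δ) x)`. Since `u ~ λz` and `z^γ = A/t`, we get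
`t u^γ → Aλ^γ`; since `β > γ`, `x = (t u^γ) u^{β-γ} / A → 0`, so the difference quotient tends to `1`.
-/

open Real Filter Topology

lemma tendsto_div_rpow_one_div_atTop_nhdsGT_zero {A γ : ℝ} (hA : 0 < A) (hγ : 0 < γ) :
    Tendsto (fun t : ℝ => (A / t) ^ (1 / γ)) atTop (𝓝[>] 0) := by
  have hAt : Tendsto (fun t : ℝ => A / t) atTop (𝓝 0) :=
    tendsto_const_nhds.div_atTop tendsto_id
  refine tendsto_nhdsWithin_iff.2 ⟨?_, ?_⟩
  · have h := hAt.rpow_const (p := 1 / γ) (Or.inr (one_div_pos.2 hγ).le)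
    rwa [zero_rpow (one_div_pos.2 hγ).ne'] at h
  · filter_upwards [eventually_gt_atTop 0] with t ht
    exact rpow_pos_of_pos (div_pos hA ht) _

lemma tendsto_one_sub_exp_neg_mul_nhdsGT_zero {c : ℝ} (hc : 0 < c) :
    Tendsto (fun z : ℝ => 1 - exp (-c * z)) (𝓝[>] 0) (𝓝[>] 0) := by
  refine tendsto_nhdsWithin_iff.2 ⟨?_, ?_⟩
  · have h : Continuous (fun z : ℝ => 1 - exp (-c * z)) := by fun_prop
    simpa using (h.tendsto 0).mono_left nhdsWithin_le_nhds
  · filter_upwards [self_mem_nhdsWithin] with z (hz : 0 < z)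
    simpa using mul_pos hc hz

lemma tendsto_one_sub_exp_neg_mul_div (c : ℝ) :
    Tendsto (fun z : ℝ => (1 - exp (-c * z)) / z) (𝓝[≠] 0) (𝓝 c) := by
  have hd : HasDerivAt (fun z : ℝ => 1 - exp (-c * z)) c 0 := by
    simpa using ((hasDerivAt_id (0 : ℝ)).const_mul (-c)).exp.const_sub 1
  refine (hasDerivAt_iff_tendsto_slope.1 hd).congr fun z => ?_
  simp [slope_def_field]

lemma tendsto_div_mul_one_sub_exp_neg_mul_rpow {A γ c : ℝ} (hA : 0 < A) (hγ : 0 < γ) (hc : 0 ≤ c) :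
    Tendsto (fun t : ℝ => t / A * (1 - exp (-c * (A / t) ^ (1 / γ))) ^ γ) atTop (𝓝 (c ^ γ)) := by
  have hz := tendsto_div_rpow_one_div_atTop_nhdsGT_zero hA hγ
  have hquot := ((tendsto_one_sub_exp_neg_mul_div c).comp
    (hz.mono_right (nhdsWithin_mono _ fun _ h => ne_of_gt h))).rpow_const (p := γ) (Or.inr hγ.le)
  refine hquot.congr' ?_
  filter_upwards [eventually_gt_atTop 0] with t ht
  have hzpos : 0 < (A / t) ^ (1 / γ) := rpow_pos_of_pos (div_pos hA ht) _
  have hu : 0 ≤ 1 - exp (-c * (A / t) ^ (1 / γ)) := by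
    simpa using mul_nonneg hc hzpos.le
  have hzγ : ((A / t) ^ (1 / γ)) ^ γ = A / t := by
    rw [← rpow_mul (div_pos hA ht).le, one_div_mul_cancel hγ.ne', rpow_one]
  simp only [Function.comp, div_rpow hu hzpos.le, hzγ]
  field_simp

lemma tendsto_rpow_sub_mul_one_add_mul_rpow_sub_one_div {α : Type*} {l : Filter α}
    {u w : α → ℝ} {γ β p L : ℝ} (hu : Tendsto u l (𝓝[>] 0))
    (hw : Tendsto (fun a => w a * u a ^ γ) l (𝓝 L)) (hγβ : γ < β) (hp : p ≠ 0) :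
    Tendsto (fun a => u a ^ (γ - β) * (((1 + w a * u a ^ β) ^ p - 1) / p)) l (𝓝 L) := by
  set f : ℝ → ℝ := fun x => (1 + x) ^ p
  have hupos : ∀ᶠ a in l, 0 < u a := hu self_mem_nhdsWithin
  have hpow : ∀ᶠ a in l, u a ^ β = u a ^ γ * u a ^ (β - γ) := hupos.mono fun a ha => by
    rw [← rpow_add ha, add_sub_cancel]
  have hx : Tendsto (fun a => w a * u a ^ β) l (𝓝 0) := by
    have h := hw.mul ((tendsto_nhdsWithin_iff.1 hu).1.rpow_const (p := β - γ) (Or.inr (by linarith)))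
    rw [zero_rpow (by linarith), mul_zero] at h
    refine h.congr' ?_
    filter_upwards [hpow] with a ha
    rw [ha, mul_assoc]
  have hf : HasDerivAt f p 0 := by
    simpa using ((hasDerivAt_id (0 : ℝ)).const_add 1).rpow_const (p := p) (Or.inl (by norm_num))
  -- `w a * u a ^ β` may vanish, so use `dslope`, which is continuous at `0`, rather than the difference quotient.
  have hslope : Tendsto (dslope f 0) (𝓝 0) (𝓝 p) := by
    simpa [dslope_same, hf.deriv] using (continuousAt_dslope_same.2 hf.differentiableAt).tendsto
  have h := hw.mul ((hslope.comp hx).div_const p)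
  rw [div_self hp, mul_one] at h
  refine h.congr' ?_
  filter_upwards [hupos] with a ha
  set x := w a * u a ^ β
  have hdiff : x * dslope f 0 x = (1 + x) ^ p - 1 := by
    simpa [f] using sub_smul_dslope f 0 x
  have hux : u a ^ (γ - β) * x = w a * u a ^ γ := by
    rw [mul_left_comm, ← rpow_add ha, sub_add_cancel]
  rw [Function.comp_apply, ← hdiff, ← hux]
  ring

theorem stable_limit_gamma_lt_beta_general
    (β γ θ A δ : ℝ) (hγ : 0 < γ) (hγβ : γ < β)
    (hA : 0 < A) (hδ : δ = γ / β)
    (B Φ : ℝ → ℝ → ℝ)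
    (hB : ∀ t s, B t s = 1 + t * (1 - s) ^ β / A)
    (hΦ : ∀ t s, Φ t s = Real.exp (-(θ * A) * (1 - s) ^ (γ - β) * ((B t s ^ (1 - δ) - 1) / (1 - δ)))) :
    ∀ lam : ℝ, 0 < lam →
      Tendsto (fun t : ℝ => Φ t (Real.exp (-lam * (A / t) ^ (1 / γ))))
        atTop (nhds (Real.exp (-(θ * A) * lam ^ γ))) := by
  intro lam hlam
  have hδ1 : 1 - δ ≠ 0 := by
    rw [hδ]
    exact sub_ne_zero.2 ((div_lt_one (hγ.trans hγβ)).2 hγβ).ne'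
  have hu := (tendsto_one_sub_exp_neg_mul_nhdsGT_zero hlam).comp
    (tendsto_div_rpow_one_div_atTop_nhdsGT_zero hA hγ)
  have hw := tendsto_div_mul_one_sub_exp_neg_mul_rpow hA hγ hlam.le
  have hexponent := (tendsto_rpow_sub_mul_one_add_mul_rpow_sub_one_div hu hw hγβ hδ1).const_mul
    (-(θ * A))
  refine hexponent.rexp.congr fun t => ?_
  simp only [hΦ, hB, Function.comp_apply, mul_div_right_comm, mul_assoc]

theorem stable_limit_gamma_lt_beta
    (β γ θ A δ : ℝ) (hγ : 0 < γ) (hγβ : γ < β) (hβ1 : β ≤ 1)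
    (hθ : 0 < θ) (hA : 0 < A) (hδ : δ = γ / β)
    (B Φ : ℝ → ℝ → ℝ)
    (hB : ∀ t s, B t s = 1 + t * (1 - s) ^ β / A)
    (hΦ : ∀ t s, Φ t s = Real.exp (-(θ * A) * (1 - s) ^ (γ - β) * ((B t s ^ (1 - δ) - 1) / (1 - δ)))) :
    ∀ lam : ℝ, 0 < lam →
      Tendsto (fun t : ℝ => Φ t (Real.exp (-lam * (A / t) ^ (1 / γ))))
        atTop (nhds (Real.exp (-(θ * A) * lam ^ γ))) :=
  stable_limit_gamma_lt_beta_general β γ θ A δ hγ hγβ hA hδ B Φ hB hΦ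
end

section
/- Let 0 < β < γ ≤ 1, θ > 0, A > 0, δ = γ/β > 1, and Φ(t,s) = exp( -θA(1-s)^{γ-β}(1 - B(t,s)^{-(δ-1)})/(δ-1) ) with B(t,s) = 1 + t(1-s)^β/A. With normalization z = z(t) = (A/t)^{1/γ}, for every λ > 0, lim_{t→∞} Φ(t, e^{-λz}) = 1. -/
open Real Filter Topology

/-
The exponent of Φ(t, s) is -θA (1-s)^(γ-β) · (1 - B^(-(δ-1)))/(δ-1).
Since δ > 1 and B ≥ 1, the last factor stays in [0, 1/(δ-1)], while 1 - s → 0 because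
z → 0, and γ - β > 0 makes (1-s)^(γ-β) → 0. So the exponent is small times bounded, hence tends to 0, and Φ → 1.
-/

theorem tendsto_rpow_const_nhds_zero {α : Type*} {l : Filter α} {f : α → ℝ} {p : ℝ}
    (hp : 0 < p) (hf : Tendsto f l (𝓝 0)) : Tendsto (fun x => f x ^ p) l (𝓝 0) := by
  simpa [zero_rpow hp.ne'] using hf.rpow_const (Or.inr hp.le)

theorem tendsto_one_sub_exp_nhds_zero {α : Type*} {l : Filter α} {f : α → ℝ}
    (hf : Tendsto f l (𝓝 0)) : Tendsto (fun x => 1 - exp (f x)) l (𝓝 0) := by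
  simpa using ((continuous_exp.tendsto 0).comp hf).const_sub 1

theorem norm_one_sub_rpow_neg_div_le {b r : ℝ} (hb : 1 ≤ b) (hr : 0 ≤ r) :
    ‖(1 - b ^ (-r)) / r‖ ≤ r⁻¹ := by
  have h0 : 0 ≤ 1 - b ^ (-r) :=
    sub_nonneg.2 (rpow_le_one_of_one_le_of_nonpos hb (neg_nonpos.2 hr))
  have h1 : 1 - b ^ (-r) ≤ 1 := sub_le_self _ (rpow_nonneg (zero_le_one.trans hb) _)
  rw [norm_of_nonneg (div_nonneg h0 hr), div_eq_mul_inv]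
  exact mul_le_of_le_one_left (inv_nonneg.2 hr) h1

theorem degenerate_limit_beta_lt_gamma_gamma_norm_general
    (β γ θ A δ : ℝ) (hβ : 0 < β) (hβγ : β < γ)
    (hA : 0 < A) (hδ : δ = γ / β)
    (B Φ : ℝ → ℝ → ℝ)
    (hB : ∀ t s, B t s = 1 + t * (1 - s) ^ β / A)
    (hΦ : ∀ t s, Φ t s = Real.exp (-(θ * A) * (1 - s) ^ (γ - β) * ((1 - B t s ^ (-(δ - 1))) / (δ - 1)))) :
    ∀ lam : ℝ, 0 < lam →
      Tendsto (fun t : ℝ => Φ t (Real.exp (-lam * (A / t) ^ (1 / γ))))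
        atTop (nhds 1) := by
  intro lam hlam
  have hγ : 0 < γ := hβ.trans hβγ
  have hδ1 : 0 ≤ δ - 1 := by rw [hδ, sub_nonneg, one_le_div hβ]; exact hβγ.le
  set s : ℝ → ℝ := fun t => exp (-lam * (A / t) ^ (1 / γ))
  have hz : Tendsto (fun t : ℝ => -lam * (A / t) ^ (1 / γ)) atTop (𝓝 0) := by
    simpa using (tendsto_rpow_const_nhds_zero (one_div_pos.2 hγ)
      (tendsto_const_nhds.div_atTop tendsto_id)).const_mul (-lam)
  have hs_le : ∀ t, 0 < t → s t ≤ 1 := fun t ht =>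
    exp_le_one_iff.2 <|
      mul_nonpos_of_nonpos_of_nonneg (by linarith) (rpow_nonneg (div_pos hA ht).le _)
  have hbdd : IsBoundedUnder (· ≤ ·) atTop
      ((‖·‖) ∘ fun t => (1 - B t (s t) ^ (-(δ - 1))) / (δ - 1)) := by
    refine isBoundedUnder_of_eventually_le (a := (δ - 1)⁻¹) ?_
    filter_upwards [eventually_gt_atTop 0] with t ht
    refine norm_one_sub_rpow_neg_div_le ?_ hδ1
    rw [hB]
    exact le_add_of_nonneg_right
      (div_nonneg (mul_nonneg ht.le (rpow_nonneg (sub_nonneg.2 (hs_le t ht)) β)) hA.le)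
  have hsmall : Tendsto (fun t => -(θ * A) * (1 - s t) ^ (γ - β)) atTop (𝓝 0) := by
    rw [← mul_zero (-(θ * A))]
    exact (tendsto_rpow_const_nhds_zero (sub_pos.2 hβγ)
      (tendsto_one_sub_exp_nhds_zero hz)).const_mul _
  have hexp := (continuous_exp.tendsto 0).comp (hsmall.zero_mul_isBoundedUnder_le hbdd)
  rw [exp_zero] at hexp
  exact hexp.congr fun t => (hΦ _ _).symm

theorem degenerate_limit_beta_lt_gamma_gamma_norm
    (β γ θ A δ : ℝ) (hβ : 0 < β) (hβγ : β < γ) (hγ1 : γ ≤ 1)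
    (hθ : 0 < θ) (hA : 0 < A) (hδ : δ = γ / β)
    (B Φ : ℝ → ℝ → ℝ)
    (hB : ∀ t s, B t s = 1 + t * (1 - s) ^ β / A)
    (hΦ : ∀ t s, Φ t s = Real.exp (-(θ * A) * (1 - s) ^ (γ - β) * ((1 - B t s ^ (-(δ - 1))) / (δ - 1)))) :
    ∀ lam : ℝ, 0 < lam →
      Tendsto (fun t : ℝ => Φ t (Real.exp (-lam * (A / t) ^ (1 / γ))))
        atTop (nhds 1) :=
  degenerate_limit_beta_lt_gamma_gamma_norm_general β γ θ A δ hβ hβγ hA hδ B Φ hB hΦ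
end
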